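/- For every n ∈ ℕ and all complex numbers x, y: ∑_{j=0}^{n} binom(n, j) · (−i)^j · He_{n−j}(x) · He_j(y) = (x − i·y)^n. Equivalently, with physicists' Hermite polynomials, ∑_{j=0}^{n} binom(n, j)·(−i)^j·H_{n−j}(x)·H_j(y) = 2^n·(x − i·y)^n. (This Hermite addition identity is the computation relating the Kudla–Millson theta kernel φ^V_{1,[k]} paired against the holomorphic form η_f to Shintani's scalar-valued theta kernel with Schwartz function (x₁ + i x₂)^{k+1}·φ₀.) -/

import Mathlib

/-!
`He_n(x)` has exponential generating function `exp (x t - t² / 2)`, so the sum on the left is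
`n!` times the `t^n`-coefficient of `exp (x t - t² / 2) · exp (-i y t - (-i t)² / 2)
= exp ((x - i y) t)`. Rather than working with power series we phrase this through the
recurrence `a (m + 1) = p a m + s m a (m - 1)`, which says that the EGF of `a` satisfies
`A' = (p + s t) A`: binomial convolution multiplies EGFs, hence adds the pairs `(p, s)`,
and the Gaussian factors cancel exactly when the two values of `s` are opposite.
-/

noncomputable section

open Finset Polynomial

section BinomialConvolution

variable {R : Type*} [CommSemiring R]

def binomialConv (a b : ℕ → R) (n : ℕ) : R :=
  ∑ ij ∈ antidiagonal n, (n.choose ij.1 : R) * a ij.1 * b ij.2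

theorem binomialConv_comm (a b : ℕ → R) (n : ℕ) :
    binomialConv a b n = binomialConv b a n := by
  rw [binomialConv, ← Nat.sum_antidiagonal_swap]
  refine sum_congr rfl fun ij hij => ?_
  rw [Nat.choose_symm_of_eq_add (mem_antidiagonal.mp hij).symm]
  simp only [Prod.fst_swap, Prod.snd_swap]
  ring

theorem binomialConv_succ (a b : ℕ → R) (n : ℕ) :
    binomialConv a b (n + 1) =
      binomialConv (fun m => a (m + 1)) b n + binomialConv a (fun m => b (m + 1)) n := by
  simp only [binomialConv, mul_assoc]
  rw [sum_antidiagonal_choose_succ_mul (fun i j => a i * b j), add_comm]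
  congr 1
  refine sum_congr rfl fun ij hij => ?_
  rw [Nat.choose_symm_of_eq_add (mem_antidiagonal.mp hij).symm]

theorem binomialConv_natCast_mul_left (a b : ℕ → R) (n : ℕ) :
    binomialConv (fun m => (m : R) * a (m - 1)) b n = n * binomialConv a b (n - 1) := by
  cases n with
  | zero => simp [binomialConv]
  | succ n =>
    rw [binomialConv, Nat.sum_antidiagonal_succ, binomialConv, mul_sum]
    simp only [Nat.cast_zero, zero_mul, mul_zero, zero_add, Nat.add_sub_cancel]
    refine sum_congr rfl fun ij _ => ?_
    have h := congrArg (Nat.cast : ℕ → R) (Nat.add_one_mul_choose_eq n ij.1)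
    push_cast at h ⊢
    calc _ = ((n.succ.choose (ij.1 + 1) : R) * (ij.1 + 1)) * (a ij.1 * b ij.2) := by ring
      _ = _ := by rw [← h]; ring

theorem binomialConv_natCast_mul_right (a b : ℕ → R) (n : ℕ) :
    binomialConv a (fun m => (m : R) * b (m - 1)) n = n * binomialConv a b (n - 1) := by
  rw [binomialConv_comm, binomialConv_natCast_mul_left, binomialConv_comm]

def HermiteRecurrence (a : ℕ → R) (p s : R) : Prop :=
  ∀ m, a (m + 1) = p * a m + s * ((m : R) * a (m - 1))

theorem HermiteRecurrence.binomialConv {a b : ℕ → R} {p q s r : R}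
    (ha : HermiteRecurrence a p s) (hb : HermiteRecurrence b q r) :
    HermiteRecurrence (binomialConv a b) (p + q) (s + r) := by
  intro n
  have hlin : _root_.binomialConv (fun m => p * a m + s * ((m : R) * a (m - 1))) b n +
      _root_.binomialConv a (fun m => q * b m + r * ((m : R) * b (m - 1))) n =
      (p + q) * _root_.binomialConv a b n +
        s * _root_.binomialConv (fun m => (m : R) * a (m - 1)) b n +
        r * _root_.binomialConv a (fun m => (m : R) * b (m - 1)) n := by
    simp only [_root_.binomialConv, mul_sum, ← sum_add_distrib]
    exact sum_congr rfl fun ij _ => by ring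
  rw [binomialConv_succ, funext ha, funext hb, hlin, binomialConv_natCast_mul_left,
    binomialConv_natCast_mul_right]
  ring

theorem HermiteRecurrence.eq_pow_mul {a : ℕ → R} {p : R} (ha : HermiteRecurrence a p 0)
    (n : ℕ) : a n = p ^ n * a 0 := by
  induction n with
  | zero => simp
  | succ n ih => rw [ha, ih]; ring

theorem HermiteRecurrence.pow_mul {a : ℕ → R} {p s : R} (ha : HermiteRecurrence a p s)
    (z : R) : HermiteRecurrence (fun m => z ^ m * a m) (z * p) (z ^ 2 * s) := by
  intro m
  cases m with
  | zero =>
    simp only [ha 0, Nat.cast_zero, zero_mul, mul_zero, add_zero, pow_zero, one_mul]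
    ring
  | succ m =>
    simp only [ha (m + 1), Nat.add_sub_cancel]
    ring

end BinomialConvolution

theorem binomialConv_eq_pow_mul {R : Type*} [CommRing R] {a b : ℕ → R} {p q s : R}
    (ha : HermiteRecurrence a p s) (hb : HermiteRecurrence b q (-s)) (n : ℕ) :
    binomialConv a b n = (p + q) ^ n * (a 0 * b 0) := by
  have hab := ha.binomialConv hb
  rw [add_neg_cancel] at hab
  simpa [binomialConv] using hab.eq_pow_mul n

theorem derivative_hermite_succ (n : ℕ) :
    derivative (hermite (n + 1)) = (n + 1 : ℤ[X]) * hermite n := by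
  induction n with
  | zero => simp
  | succ n ih =>
    rw [hermite_succ (n + 1), derivative_sub, derivative_mul, ih, derivative_mul, hermite_succ n]
    simp only [derivative_X, derivative_add, derivative_natCast, derivative_one]
    push_cast
    ring

theorem hermiteRecurrence_aeval_hermite {A : Type*} [CommRing A] (x : A) :
    HermiteRecurrence (fun m => aeval x (hermite m)) x (-1) := by
  intro m
  cases m with
  | zero => simp
  | succ m =>
    dsimp only
    rw [hermite_succ (m + 1), derivative_hermite_succ]
    simp only [map_sub, map_mul, aeval_X, map_add, map_natCast, map_one, Nat.add_sub_cancel]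
    push_cast
    ring

/-- Hermite addition identity: for every `n` and all complex `x, y`,
`∑_{j=0}^{n} C(n,j)·(−i)^j·He_{n−j}(x)·He_j(y) = (x − iy)^n`, where `He_n` is the
probabilists' Hermite polynomial.  This relates the Kudla–Millson theta kernel paired
against `η_f` to Shintani's scalar-valued theta kernel. -/
theorem hermite_addition_identity (n : ℕ) (x y : ℂ) :
    ∑ j ∈ Finset.range (n + 1),
        (Nat.choose n j : ℂ) * (-Complex.I) ^ j *
          (Polynomial.aeval x (Polynomial.hermite (n - j)) : ℂ) *
          (Polynomial.aeval y (Polynomial.hermite j) : ℂ) =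
      (x - Complex.I * y) ^ n := by
  have hy : HermiteRecurrence (fun m => (-Complex.I) ^ m * aeval y (hermite m))
      (-Complex.I * y) 1 := by
    simpa using (hermiteRecurrence_aeval_hermite y).pow_mul (-Complex.I)
  have h := binomialConv_eq_pow_mul hy (hermiteRecurrence_aeval_hermite x) n
  rw [binomialConv, Nat.sum_antidiagonal_eq_sum_range_succ (fun i j =>
    (n.choose i : ℂ) * ((-Complex.I) ^ i * aeval y (hermite i)) * aeval x (hermite j))] at h
  convert h using 1
  · exact sum_congr rfl fun j _ => by ring
  · simp only [pow_zero, hermite_zero, map_one, mul_one]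
    ring
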